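/- (Closed form for δ = 0.) Let ε > 0 and let m be a distribution on V with prefix sums s⁰. For t ∈ ℕ, let s^t denote the prefix sums of T_{ε,0}^t(m). Fix 1 ≤ k ≤ q. If s⁰_k = 0 then s^t_k = 0 for all t. If s⁰_k > 0, set τ_k = ⌊max{−ln(s⁰_k·(e^ε + 1))/ε + 1, 0}⌋; then s^t_k = e^{tε}·s⁰_k for all 0 ≤ t ≤ τ_k, and s^t_k = 1 − e^{−ε(t − τ_k)}·(1 − e^{τ_k ε}·s⁰_k) for all t ≥ τ_k + 1. -/
import Mathlib


open Finset

/-- Prefix sum `s_k = p_1 + ⋯ + p_k` (0-indexed internally: sum of entries with index `< k`). -/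
noncomputable def prefixSum (q : ℕ) (p : Fin q → ℝ) (k : ℕ) : ℝ :=
  ∑ i ∈ Finset.univ.filter (fun i : Fin q => (i : ℕ) < k), p i

/-- `p` is a probability distribution on `V = {1, …, q}`. -/
def IsDist (q : ℕ) (p : Fin q → ℝ) : Prop :=
  (∀ k, 0 ≤ p k) ∧ ∑ k, p k = 1

/-- The modified prefix sums `s'_k` defining the operator `T_{ε,δ}`:
`s'_0 = 0` and `s'_k = min {1, min {e^ε s_k, 1 - e^{-ε} (1 - s_k)} + δ}` for `k ≥ 1`. -/
noncomputable def sPrime (ε δ : ℝ) (q : ℕ) (p : Fin q → ℝ) (k : ℕ) : ℝ :=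
  if k = 0 then 0
  else min 1 (min (Real.exp ε * prefixSum q p k)
      (1 - Real.exp (-ε) * (1 - prefixSum q p k)) + δ)

/-- The operator `T_{ε,δ}`: `(T_{ε,δ} p)_k = s'_k - s'_{k-1}`. -/
noncomputable def Tmap (ε δ : ℝ) (q : ℕ) (p : Fin q → ℝ) : Fin q → ℝ :=
  fun k => sPrime ε δ q p ((k : ℕ) + 1) - sPrime ε δ q p (k : ℕ)

/-- `P` and `Q` are `(ε,δ)`-close: for every `S ⊆ V`,
`P(S) ≤ e^ε Q(S) + δ` and `Q(S) ≤ e^ε P(S) + δ`. -/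
def Close (ε δ : ℝ) (q : ℕ) (P Q : Fin q → ℝ) : Prop :=
  ∀ S : Finset (Fin q),
    (∑ k ∈ S, P k) ≤ Real.exp ε * (∑ k ∈ S, Q k) + δ ∧
    (∑ k ∈ S, Q k) ≤ Real.exp ε * (∑ k ∈ S, P k) + δ

/-- Dominance ordering: `x ⪯ y` iff every prefix sum of `x` is at most that of `y`. -/
def Dom (q : ℕ) (x y : Fin q → ℝ) : Prop :=
  ∀ k : ℕ, k ≤ q → prefixSum q x k ≤ prefixSum q y k

/-! ### Auxiliary lemmas -/

/-- The scalar map governing the evolution of a single prefix sum under `T_{ε,0}`. -/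
noncomputable def Fop (ε s : ℝ) : ℝ :=
  min 1 (min (Real.exp ε * s) (1 - Real.exp (-ε) * (1 - s)) + 0)

lemma Fop_zero (ε : ℝ) (hε : 0 ≤ ε) : Fop ε 0 = 0 := by
  unfold Fop
  have h1 : Real.exp (-ε) ≤ 1 := Real.exp_le_one_iff.mpr (by linarith)
  have h2 : (0:ℝ) < Real.exp (-ε) := Real.exp_pos _
  have hi : min (Real.exp ε * 0) (1 - Real.exp (-ε) * (1 - 0)) = Real.exp ε * 0 :=
    min_eq_left (by nlinarith)
  rw [add_zero, hi, mul_zero, min_eq_right (by norm_num)]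

lemma Fop_grow (ε s : ℝ) (hε : 0 < ε) (hs : 0 ≤ s)
    (h : s * (Real.exp ε + 1) ≤ 1) : Fop ε s = Real.exp ε * s := by
  unfold Fop
  have hE : 1 < Real.exp ε := by
    have := Real.exp_lt_exp.mpr hε; rwa [Real.exp_zero] at this
  have hinv : Real.exp (-ε) * Real.exp ε = 1 := by
    rw [← Real.exp_add]; simp
  have hip : (0:ℝ) < Real.exp (-ε) := Real.exp_pos _
  have hi : min (Real.exp ε * s) (1 - Real.exp (-ε) * (1 - s)) = Real.exp ε * s :=
    min_eq_left (by nlinarith)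
  rw [add_zero, hi, min_eq_right (by nlinarith)]

lemma Fop_decay (ε s : ℝ) (hε : 0 < ε) (hs : s ≤ 1)
    (h : 1 ≤ s * (Real.exp ε + 1)) :
    Fop ε s = 1 - Real.exp (-ε) * (1 - s) := by
  unfold Fop
  have hE : 1 < Real.exp ε := by
    have := Real.exp_lt_exp.mpr hε; rwa [Real.exp_zero] at this
  have hinv : Real.exp (-ε) * Real.exp ε = 1 := by
    rw [← Real.exp_add]; simp
  have hip : (0:ℝ) < Real.exp (-ε) := Real.exp_pos _
  have hi : min (Real.exp ε * s) (1 - Real.exp (-ε) * (1 - s))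
      = 1 - Real.exp (-ε) * (1 - s) := min_eq_right (by nlinarith)
  rw [add_zero, hi, min_eq_right (by nlinarith)]

lemma prefixSum_succ' (q : ℕ) (p : Fin q → ℝ) (k : ℕ) (hk : k < q) :
    prefixSum q p (k + 1) = prefixSum q p k + p ⟨k, hk⟩ := by
  unfold prefixSum
  have hset : Finset.univ.filter (fun i : Fin q => (i : ℕ) < k + 1)
      = insert ⟨k, hk⟩ (Finset.univ.filter (fun i : Fin q => (i : ℕ) < k)) := by
    ext i
    simp only [Finset.mem_filter, Finset.mem_univ, true_and, Finset.mem_insert,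
      Fin.ext_iff]
    omega
  rw [hset, Finset.sum_insert (by simp), add_comm]

lemma sPrime_eq_Fop (ε : ℝ) (q : ℕ) (p : Fin q → ℝ) (k : ℕ) (hk : 1 ≤ k) :
    sPrime ε 0 q p k = Fop ε (prefixSum q p k) := by
  unfold sPrime Fop
  rw [if_neg (by omega)]

lemma prefixSum_Tmap (ε : ℝ) (q : ℕ) (p : Fin q → ℝ) (k : ℕ) (hk : k ≤ q) :
    prefixSum q (Tmap ε 0 q p) k = sPrime ε 0 q p k := by
  induction k with
  | zero => simp [prefixSum, sPrime]
  | succ n ih =>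
      have hn : n < q := hk
      rw [prefixSum_succ' q _ n hn, ih (le_of_lt hn)]
      simp only [Tmap]
      ring

lemma prefixSum_iter (ε : ℝ) (q : ℕ) (m : Fin q → ℝ) (k : ℕ) (hk1 : 1 ≤ k)
    (hkq : k ≤ q) (t : ℕ) :
    prefixSum q ((Tmap ε 0 q)^[t] m) k = (Fop ε)^[t] (prefixSum q m k) := by
  induction t with
  | zero => simp
  | succ n ih =>
      rw [Function.iterate_succ_apply', Function.iterate_succ_apply',
        prefixSum_Tmap ε q _ k hkq, sPrime_eq_Fop ε q _ k hk1, ih]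

lemma iter_closed (ε s : ℝ) (hε : 0 < ε) (hs : 0 < s) (hs1 : s ≤ 1) (τ : ℕ)
    (hτ : τ = ⌊max (-(Real.log (s * (Real.exp ε + 1))) / ε + 1) 0⌋₊) :
    (∀ t : ℕ, t ≤ τ → (Fop ε)^[t] s = Real.exp ((t : ℝ) * ε) * s) ∧
    (∀ t : ℕ, τ + 1 ≤ t → (Fop ε)^[t] s =
      1 - Real.exp (-(ε * ((t : ℝ) - (τ : ℝ)))) * (1 - Real.exp ((τ : ℝ) * ε) * s)) := by
  have hE : 1 < Real.exp ε := by
    have := Real.exp_lt_exp.mpr hε; rwa [Real.exp_zero] at this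
  have hsE : 0 < s * (Real.exp ε + 1) := by nlinarith
  have hlog : Real.exp (Real.log (s * (Real.exp ε + 1))) = s * (Real.exp ε + 1) :=
    Real.exp_log hsE
  set L : ℝ := Real.log (s * (Real.exp ε + 1)) with hL
  have fact1 : ∀ j : ℕ, j < τ →
      Real.exp ((j : ℝ) * ε) * (s * (Real.exp ε + 1)) ≤ 1 := by
    intro j hj
    have hτ1 : (1 : ℝ) ≤ (τ : ℝ) := by exact_mod_cast Nat.one_le_iff_ne_zero.mpr (by omega)
    have hτx : (τ : ℝ) ≤ max (-L / ε + 1) 0 := hτ ▸ Nat.floor_le (le_max_right _ _)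
    have hτx' : (τ : ℝ) ≤ -L / ε + 1 := by
      rcases le_total (-L / ε + 1) 0 with h | h
      · rw [max_eq_right h] at hτx; linarith
      · rwa [max_eq_left h] at hτx
    have hjx : (j : ℝ) ≤ -L / ε := by
      have hj' : (j : ℝ) + 1 ≤ (τ : ℝ) := by exact_mod_cast hj
      linarith
    have hjε : (j : ℝ) * ε ≤ -L := (le_div_iff₀ hε).mp hjx
    have hle := Real.exp_le_exp.mpr hjε
    rw [Real.exp_neg, hlog] at hle
    have h2 : Real.exp ((j : ℝ) * ε) * (s * (Real.exp ε + 1))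
        ≤ (s * (Real.exp ε + 1))⁻¹ * (s * (Real.exp ε + 1)) :=
      mul_le_mul_of_nonneg_right hle (le_of_lt hsE)
    rwa [inv_mul_cancel₀ (ne_of_gt hsE)] at h2
  have grow : ∀ t : ℕ, t ≤ τ → (Fop ε)^[t] s = Real.exp ((t : ℝ) * ε) * s := by
    intro t
    induction t with
    | zero => intro _; simp
    | succ n ih =>
        intro hn
        rw [Function.iterate_succ_apply', ih (by omega)]
        rw [Fop_grow ε _ hε (by positivity)
          (by rw [mul_assoc]; exact fact1 n (by omega))]
        rw [← mul_assoc, ← Real.exp_add]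
        congr 1
        push_cast; ring
  refine ⟨grow, ?_⟩
  have fact3 : 1 ≤ Real.exp ((τ : ℝ) * ε) * (s * (Real.exp ε + 1)) := by
    have hlt : -L / ε + 1 < (τ : ℝ) + 1 := by
      have h1 : max (-L / ε + 1) 0 < (τ : ℝ) + 1 := by
        rw [hτ]; exact_mod_cast Nat.lt_floor_add_one (max (-L / ε + 1) 0)
      exact lt_of_le_of_lt (le_max_left _ _) h1
    have h2 : -L / ε < (τ : ℝ) := by linarith
    have hτε : -L < (τ : ℝ) * ε := (div_lt_iff₀ hε).mp h2
    have hle := Real.exp_le_exp.mpr (le_of_lt hτε)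
    rw [Real.exp_neg, hlog] at hle
    have h3 : (s * (Real.exp ε + 1))⁻¹ * (s * (Real.exp ε + 1))
        ≤ Real.exp ((τ : ℝ) * ε) * (s * (Real.exp ε + 1)) :=
      mul_le_mul_of_nonneg_right hle (le_of_lt hsE)
    rwa [inv_mul_cancel₀ (ne_of_gt hsE)] at h3
  have fact4 : Real.exp ((τ : ℝ) * ε) * s ≤ 1 := by
    cases τ with
    | zero => simpa using hs1
    | succ u =>
        have h1 := fact1 u (by omega)
        have h2 : Real.exp ((↑(u + 1) : ℝ) * ε) = Real.exp ε * Real.exp ((u : ℝ) * ε) := by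
          rw [← Real.exp_add]; congr 1; push_cast; ring
        rw [h2]
        have he := Real.exp_pos ((u : ℝ) * ε)
        nlinarith [h1]
  have decay : ∀ u : ℕ, (Fop ε)^[τ + u] s
      = 1 - Real.exp (-(ε * (u : ℝ))) * (1 - Real.exp ((τ : ℝ) * ε) * s) := by
    intro u
    induction u with
    | zero =>
        simp only [Nat.add_zero, Nat.cast_zero, mul_zero, neg_zero, Real.exp_zero, one_mul]
        rw [grow τ le_rfl]; ring
    | succ n ih =>
        have hiter : (Fop ε)^[τ + (n + 1)] s = Fop ε ((Fop ε)^[τ + n] s) := by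
          rw [show τ + (n + 1) = (τ + n) + 1 by omega, Function.iterate_succ_apply']
        rw [hiter, ih]
        set c : ℝ := 1 - Real.exp ((τ : ℝ) * ε) * s with hc
        have hc0 : 0 ≤ c := by rw [hc]; linarith
        have hen : Real.exp (-(ε * (n : ℝ))) ≤ 1 := by
          rw [Real.exp_le_one_iff]
          have : 0 ≤ ε * (n : ℝ) := by positivity
          linarith
        have henp : 0 < Real.exp (-(ε * (n : ℝ))) := Real.exp_pos _
        have hy1 : 1 - Real.exp (-(ε * (n : ℝ))) * c ≤ 1 := by nlinarith
        have hyE : 1 ≤ (1 - Real.exp (-(ε * (n : ℝ))) * c) * (Real.exp ε + 1) := by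
          have hyge : Real.exp ((τ : ℝ) * ε) * s ≤ 1 - Real.exp (-(ε * (n : ℝ))) * c := by
            nlinarith
          nlinarith [fact3]
        rw [Fop_decay ε _ hε hy1 hyE]
        have hexp : Real.exp (-ε) * Real.exp (-(ε * (n : ℝ)))
            = Real.exp (-(ε * ((n : ℝ) + 1))) := by
          rw [← Real.exp_add]; congr 1; ring
        push_cast
        linear_combination (Real.exp ((τ:ℝ) * ε) * s - 1) * hexp
  intro t ht
  obtain ⟨u, rfl⟩ : ∃ u, t = τ + u := ⟨t - τ, by omega⟩
  rw [decay u]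
  congr 3
  push_cast
  ring

/-- closed form for δ = 0: with `s^t` the prefix sums of `T_{ε,0}^t(m)` and
`τ_k = ⌊max {−ln(s⁰_k (e^ε + 1))/ε + 1, 0}⌋`: if `s⁰_k = 0` then `s^t_k = 0` for all `t`;
if `s⁰_k > 0` then `s^t_k = e^{tε} s⁰_k` for `t ≤ τ_k`, and
`s^t_k = 1 − e^{−ε(t − τ_k)} (1 − e^{τ_k ε} s⁰_k)` for `t ≥ τ_k + 1`. -/
theorem closed_form_delta_zero (q : ℕ) (hq : 1 ≤ q) (ε : ℝ) (hε : 0 < ε)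
    (m : Fin q → ℝ) (hm : IsDist q m) (k : ℕ) (hk1 : 1 ≤ k) (hkq : k ≤ q) :
    (prefixSum q m k = 0 →
      ∀ t : ℕ, prefixSum q ((Tmap ε 0 q)^[t] m) k = 0) ∧
    (0 < prefixSum q m k →
      ∀ τ : ℕ,
        τ = ⌊max (-(Real.log (prefixSum q m k * (Real.exp ε + 1))) / ε + 1) 0⌋₊ →
        (∀ t : ℕ, t ≤ τ →
          prefixSum q ((Tmap ε 0 q)^[t] m) k = Real.exp (t * ε) * prefixSum q m k) ∧
        (∀ t : ℕ, τ + 1 ≤ t →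
          prefixSum q ((Tmap ε 0 q)^[t] m) k =
            1 - Real.exp (-(ε * ((t : ℝ) - (τ : ℝ)))) *
              (1 - Real.exp (τ * ε) * prefixSum q m k))) := by
  have hs1 : prefixSum q m k ≤ 1 := by
    unfold prefixSum
    rw [← hm.2]
    exact Finset.sum_le_sum_of_subset_of_nonneg (Finset.filter_subset _ _)
      (fun i _ _ => hm.1 i)
  constructor
  · intro h0 t
    rw [prefixSum_iter ε q m k hk1 hkq t, h0]
    induction t with
    | zero => simp
    | succ n ih => rw [Function.iterate_succ_apply', ih, Fop_zero ε (le_of_lt hε)]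
  · intro hpos τ hτ
    obtain ⟨h1, h2⟩ := iter_closed ε (prefixSum q m k) hε hpos hs1 τ hτ
    constructor
    · intro t ht
      rw [prefixSum_iter ε q m k hk1 hkq t]
      exact h1 t ht
    · intro t ht
      rw [prefixSum_iter ε q m k hk1 hkq t]
      exact h2 t ht
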